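/- Let d ≥ 1, let P be a finite set of n ≥ 2 distinct points in ℝ^d with Euclidean edge weights w({u,v}) = dist(u,v), let T* be a Euclidean minimum spanning tree of P, let ρ > 0, and let T be a spanning tree of the complete graph on P such that for every edge {u,v} of T*, every edge on the unique path in T from u to v has weight at most (1+2ρ)·dist(u,v). Enumerate the edges of T* in nondecreasing order of weight as e*_1, …, e*_{n−1}, and for 1 ≤ i ≤ n−1 let E_i be the set of edges of T lying on at least one of the T-paths joining the endpoints of e*_1, …, e*_i. Then for every 1 ≤ i ≤ n−1 there exists a subset E'_i ⊆ E_i with |E'_i| = i and ∑_{e ∈ E'_i} w(e) ≤ (1+2ρ)·∑_{k=1}^{i} w(e*_k). -/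

import Mathlib

/-!
For each edge `e*_k = {a k, b k}` of `T*` fix the `T`-path joining its endpoints. By Hall's
theorem it suffices that any `s` of these paths together contain at least `s` edges of `T`:
a system of distinct representatives then gives every `e*_k` its own edge on its path, of weight
at most `(1 + 2ρ) w(e*_k)`, and `E'_i` is the set of representatives of `e*_0, …, e*_i`.
Hall's condition is the rank inequality of the graphic matroid. The `s` edges of `T*` form a
forest `H` whose edges have their endpoints connected in the graph `G` spanned by the union of
the paths, so with `c` counting connected components,
`|E(H)| = |V| - c(H) ≤ |V| - c(G) ≤ |E(G)|`.
-/

noncomputable def edgeDist {d : ℕ} (P : Finset (EuclideanSpace ℝ (Fin d))) :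
    Sym2 {p // p ∈ P} → ℝ :=
  Sym2.lift ⟨fun u v => dist (u : EuclideanSpace ℝ (Fin d)) (v : EuclideanSpace ℝ (Fin d)),
    fun u v => dist_comm _ _⟩

namespace SimpleGraph

variable {V : Type*} {G H : SimpleGraph V}

lemma Reachable.eq_of_forall_adj {β : Sort*} {f : V → β} (hf : ∀ u v, G.Adj u v → f u = f v)
    {u v : V} (h : G.Reachable u v) : f u = f v := by
  obtain ⟨p⟩ := h
  induction p with
  | nil => rfl
  | cons ha _ ih => exact (hf _ _ ha).trans ih

lemma card_connectedComponent_le_of_adj_le_reachable [Finite V] (h : H.Adj ≤ G.Reachable) :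
    Nat.card G.ConnectedComponent ≤ Nat.card H.ConnectedComponent :=
  Nat.card_le_card_of_surjective
    (Quot.lift G.connectedComponentMk fun _ _ =>
      Reachable.eq_of_forall_adj fun _ _ huv => ConnectedComponent.sound (h _ _ huv))
    (Quot.ind fun v => ⟨H.connectedComponentMk v, rfl⟩)

lemma card_connectedComponent_bot [Finite V] :
    Nat.card (⊥ : SimpleGraph V).ConnectedComponent = Nat.card V :=
  Nat.card_eq_of_bijective _
    ⟨fun _ _ h => reachable_bot.mp (ConnectedComponent.exact h), Quot.mk_surjective⟩ |>.symm

lemma card_connectedComponent_deleteEdges_of_isBridge [Finite V] {x y : V} (hadj : G.Adj x y)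
    (hb : G.IsBridge s(x, y)) :
    Nat.card (G.deleteEdges {s(x, y)}).ConnectedComponent = Nat.card G.ConnectedComponent + 1 := by
  classical
  set G' := G.deleteEdges {s(x, y)}
  have hxy : ¬G'.Reachable x y := isBridge_iff.mp hb
  -- Merging the `G'`-component of `y` into that of `x` descends to the components of `G`.
  let f (v : V) : {c : G'.ConnectedComponent // c ≠ G'.connectedComponentMk y} :=
    if hv : G'.Reachable v y then ⟨_, mt ConnectedComponent.exact hxy⟩
    else ⟨_, mt ConnectedComponent.exact hv⟩
  have hf : ∀ u v, G.Adj u v → f u = f v := by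
    intro u v huv
    by_cases he : s(u, v) = s(x, y)
    · have hfx : f x = f y := by simp [f, hxy]
      rcases Sym2.eq_iff.mp he with ⟨rfl, rfl⟩ | ⟨rfl, rfl⟩
      exacts [hfx, hfx.symm]
    · have hr : G'.Reachable u v := Adj.reachable (by simp [G', huv, he])
      have hiff : G'.Reachable u y ↔ G'.Reachable v y := ⟨hr.symm.trans, hr.trans⟩
      simp only [f, hiff, ConnectedComponent.sound hr]
  let e : G.ConnectedComponent ≃ {c : G'.ConnectedComponent // c ≠ G'.connectedComponentMk y} :=
    { toFun := Quot.lift f fun _ _ => Reachable.eq_of_forall_adj hf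
      invFun := fun c => c.1.map (Hom.ofLE (deleteEdges_le _))
      left_inv := fun c => by
        induction c using ConnectedComponent.ind with | h v => ?_
        change (f v).1.map _ = _
        by_cases hv : G'.Reachable v y
        · simpa [f, hv] using hadj.reachable.trans (hv.mono (deleteEdges_le _)).symm
        · simp [f, hv]
      right_inv := fun ⟨c, hc⟩ => by
        induction c using ConnectedComponent.ind with | h v => ?_
        change f v = _
        simp [f, mt ConnectedComponent.sound hc] }
  rw [← Nat.card_congr (Equiv.optionSubtypeNe (G'.connectedComponentMk y)), Finite.card_option,
    Nat.card_congr e]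

theorem IsAcyclic.card_edgeSet_add_card_connectedComponent [Finite V] (hG : G.IsAcyclic) :
    Nat.card G.edgeSet + Nat.card G.ConnectedComponent = Nat.card V := by
  induction hn : Nat.card G.edgeSet generalizing G with
  | zero =>
    rw [Nat.card_coe_set_eq, Set.ncard_eq_zero, edgeSet_eq_empty] at hn
    rw [hn, card_connectedComponent_bot, zero_add]
  | succ n ih =>
    obtain ⟨⟨x, y⟩, hxy⟩ : G.edgeSet.Nonempty :=
      Set.nonempty_of_ncard_ne_zero (by rw [← Nat.card_coe_set_eq, hn]; exact n.succ_ne_zero)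
    have hb : G.IsBridge s(x, y) := isAcyclic_iff_forall_adj_isBridge.mp hG hxy
    have h' := ih (hG.anti (deleteEdges_le _)) (by
      rw [edgeSet_deleteEdges, Nat.card_coe_set_eq, Set.ncard_sdiff_singleton_of_mem hxy,
        ← Nat.card_coe_set_eq, hn, Nat.add_sub_cancel])
    rw [card_connectedComponent_deleteEdges_of_isBridge hxy hb] at h'
    omega

lemma card_le_card_edgeSet_add_card_connectedComponent [Finite V] (G : SimpleGraph V) :
    Nat.card V ≤ Nat.card G.edgeSet + Nat.card G.ConnectedComponent := by
  obtain ⟨F, hFG, hF, hreach⟩ := G.exists_isAcyclic_reachable_eq_le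
  rw [← hF.card_edgeSet_add_card_connectedComponent]
  gcongr
  · exact Nat.card_mono (Set.toFinite _) (edgeSet_mono hFG)
  · exact card_connectedComponent_le_of_adj_le_reachable fun u v h => hreach ▸ h.reachable

theorem IsAcyclic.card_edgeSet_le_of_adj_le_reachable [Finite V] (hH : H.IsAcyclic)
    (h : H.Adj ≤ G.Reachable) : Nat.card H.edgeSet ≤ Nat.card G.edgeSet := by
  have := hH.card_edgeSet_add_card_connectedComponent
  have := G.card_le_card_edgeSet_add_card_connectedComponent
  have := card_connectedComponent_le_of_adj_le_reachable h
  omega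

theorem IsAcyclic.card_le_card_biUnion_edges [Finite V] [DecidableEq V] {A T : SimpleGraph V}
    (hA : A.IsAcyclic) {ι : Type*} {a b : ι → V} (hadj : ∀ k, A.Adj (a k) (b k))
    (hinj : Function.Injective fun k => s(a k, b k)) (p : ∀ k, T.Walk (a k) (b k))
    (S : Finset ι) : S.card ≤ (S.biUnion fun k => (p k).edges.toFinset).card := by
  set U := S.biUnion fun k => (p k).edges.toFinset
  set E := S.image fun k => s(a k, b k)
  have hEA : (E : Set (Sym2 V)) ⊆ A.edgeSet := by
    simpa [E, Set.subset_def] using fun k _ => hadj k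
  have hreach :
      (fromEdgeSet (E : Set (Sym2 V))).Adj ≤ (fromEdgeSet (U : Set (Sym2 V))).Reachable := by
    intro u v huv
    obtain ⟨k, hk, hkuv⟩ := by simpa [E] using huv.1
    have hk : (fromEdgeSet (U : Set (Sym2 V))).Reachable (a k) (b k) :=
      ⟨(p k).transfer _ fun e he => by
        rw [edgeSet_fromEdgeSet]
        exact ⟨Finset.mem_biUnion.mpr ⟨k, hk, List.mem_toFinset.mpr he⟩,
          T.not_isDiag_of_mem_edgeSet ((p k).edges_subset_edgeSet he)⟩⟩
    rcases hkuv with ⟨rfl, rfl⟩ | ⟨rfl, rfl⟩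
    exacts [hk, hk.symm]
  calc S.card = Nat.card (fromEdgeSet (E : Set (Sym2 V))).edgeSet := by
        rw [edgeSet_fromEdgeSet, sdiff_eq_left.mpr ?_, Nat.card_coe_set_eq, Set.ncard_coe_finset,
          Finset.card_image_of_injective _ hinj]
        exact Set.subset_compl_iff_disjoint_right.mp (hEA.trans A.edgeSet_subset_compl_diagSet)
    _ ≤ Nat.card (fromEdgeSet (U : Set (Sym2 V))).edgeSet :=
        (hA.anti (A.fromEdgeSet_le.mpr (Set.sdiff_subset.trans hEA))
          ).card_edgeSet_le_of_adj_le_reachable hreach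
    _ ≤ U.card := by
        rw [edgeSet_fromEdgeSet, Nat.card_coe_set_eq, ← Set.ncard_coe_finset]
        exact Set.ncard_le_ncard Set.sdiff_subset

theorem IsAcyclic.exists_injective_mem_edges [Finite V] {A T : SimpleGraph V} (hA : A.IsAcyclic)
    {ι : Type*} {a b : ι → V} (hadj : ∀ k, A.Adj (a k) (b k))
    (hinj : Function.Injective fun k => s(a k, b k)) (p : ∀ k, T.Walk (a k) (b k)) :
    ∃ f : ι → Sym2 V, Function.Injective f ∧ ∀ k, f k ∈ (p k).edges := by
  classical
  simpa using (Finset.all_card_le_biUnion_card_iff_exists_injective _).mp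
    (hA.card_le_card_biUnion_edges hadj hinj p)

end SimpleGraph

open scoped Classical in
theorem emst_prefix_charging_general (d n : ℕ)
    (P : Finset (EuclideanSpace ℝ (Fin d)))
    (Tstar T : SimpleGraph {p // p ∈ P})
    (hTstar : Tstar.IsTree) (hT : T.IsTree)
    (ρ : ℝ)
    (happrox : ∀ u v : {p // p ∈ P}, Tstar.Adj u v →
      ∀ p : T.Walk u v, p.IsPath → ∀ e ∈ p.edges,
        edgeDist P e ≤ (1 + 2 * ρ) *
          dist (u : EuclideanSpace ℝ (Fin d)) (v : EuclideanSpace ℝ (Fin d)))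
    (a b : Fin (n - 1) → {p // p ∈ P})
    (hadj : ∀ k, Tstar.Adj (a k) (b k))
    (hinj : Function.Injective fun k => s(a k, b k)) :
    ∀ i : Fin (n - 1),
      ∃ E' : Finset (Sym2 {p // p ∈ P}),
        E'.card = (i : ℕ) + 1 ∧
        (∀ e ∈ E', e ∈ T.edgeSet ∧
          ∃ k : Fin (n - 1), k ≤ i ∧ ∃ p : T.Walk (a k) (b k), p.IsPath ∧ e ∈ p.edges) ∧
        ∑ e ∈ E', edgeDist P e ≤ (1 + 2 * ρ) *
          ∑ k ∈ Finset.univ.filter (fun k : Fin (n - 1) => k ≤ i),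
            dist (a k : EuclideanSpace ℝ (Fin d)) (b k : EuclideanSpace ℝ (Fin d)) := by
  choose p hp using fun k => (hT.connected.preconnected (a k) (b k)).exists_isPath
  obtain ⟨f, hf, hfp⟩ := hTstar.isAcyclic.exists_injective_mem_edges hadj hinj p
  intro i
  refine ⟨(Finset.univ.filter fun k => k ≤ i).image f, ?_, ?_, ?_⟩
  · rw [Finset.card_image_of_injective _ hf, Finset.filter_ge_eq_Iic, Fin.card_Iic]
  · simp only [Finset.mem_image, Finset.mem_filter, Finset.mem_univ, true_and]
    rintro _ ⟨k, hki, rfl⟩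
    exact ⟨(p k).edges_subset_edgeSet (hfp k), k, hki, p k, hp k, hfp k⟩
  · rw [Finset.sum_image fun _ _ _ _ h => hf h, Finset.mul_sum]
    exact Finset.sum_le_sum fun k _ => happrox _ _ (hadj k) (p k) (hp k) (f k) (hfp k)

open scoped Classical in
/-- With `T*` an EMST of `P` (`|P| = n ≥ 2`) whose edges are enumerated
in nondecreasing order of weight as `e*_k = {a k, b k}` (`k = 0, …, n-2`), and `T` a
spanning tree that edge-wise `(1+2ρ)`-approximates `T*`: for every `i` there is a set
`E'_i` of `i+1` edges of `T`, each lying on a `T`-path joining the endpoints of some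
`e*_k` with `k ≤ i`, whose total weight is at most `(1+2ρ)·∑_{k ≤ i} w(e*_k)`. -/
theorem emst_prefix_charging (d n : ℕ) (hd : 1 ≤ d) (hn : 2 ≤ n)
    (P : Finset (EuclideanSpace ℝ (Fin d))) (hcard : P.card = n)
    (Tstar T : SimpleGraph {p // p ∈ P})
    (hTstar : Tstar.IsTree) (hT : T.IsTree)
    (hmin : ∀ T' : SimpleGraph {p // p ∈ P}, T'.IsTree →
      ∑ e ∈ Tstar.edgeFinset, edgeDist P e ≤ ∑ e ∈ T'.edgeFinset, edgeDist P e)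
    (ρ : ℝ) (hρ : 0 < ρ)
    (happrox : ∀ u v : {p // p ∈ P}, Tstar.Adj u v →
      ∀ p : T.Walk u v, p.IsPath → ∀ e ∈ p.edges,
        edgeDist P e ≤ (1 + 2 * ρ) *
          dist (u : EuclideanSpace ℝ (Fin d)) (v : EuclideanSpace ℝ (Fin d)))
    (a b : Fin (n - 1) → {p // p ∈ P})
    (hadj : ∀ k, Tstar.Adj (a k) (b k))
    (hinj : Function.Injective fun k => s(a k, b k))
    (hsurj : ∀ e ∈ Tstar.edgeSet, ∃ k, s(a k, b k) = e)
    (hmono : ∀ k₁ k₂ : Fin (n - 1), k₁ ≤ k₂ →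
      dist (a k₁ : EuclideanSpace ℝ (Fin d)) (b k₁ : EuclideanSpace ℝ (Fin d)) ≤
        dist (a k₂ : EuclideanSpace ℝ (Fin d)) (b k₂ : EuclideanSpace ℝ (Fin d))) :
    ∀ i : Fin (n - 1),
      ∃ E' : Finset (Sym2 {p // p ∈ P}),
        E'.card = (i : ℕ) + 1 ∧
        (∀ e ∈ E', e ∈ T.edgeSet ∧
          ∃ k : Fin (n - 1), k ≤ i ∧ ∃ p : T.Walk (a k) (b k), p.IsPath ∧ e ∈ p.edges) ∧
        ∑ e ∈ E', edgeDist P e ≤ (1 + 2 * ρ) *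
          ∑ k ∈ Finset.univ.filter (fun k : Fin (n - 1) => k ≤ i),
            dist (a k : EuclideanSpace ℝ (Fin d)) (b k : EuclideanSpace ℝ (Fin d)) :=
  emst_prefix_charging_general d n P Tstar T hTstar hT ρ happrox a b hadj hinj
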